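/- Let F : ℝ^d → ℝ be differentiable with L-Lipschitz gradient, let ν > 0, x ∈ ℝ^d, let u_1,…,u_d be an orthonormal basis of ℝ^d, and set b_j := (F(x + ν u_j) − F(x))/ν. For 1 ≤ N ≤ d, averaging uniformly over all subsets T of {1,…,d} of cardinality N: (1 / C(d,N)) · Σ_{|T| = N} ‖ (d/N)·Σ_{j ∈ T} b_j u_j ‖² = (d/N)·Σ_{j=1}^d b_j², and this quantity is at most (2d/N)·( L²·ν²·d/4 + ‖∇F(x)‖² ). -/

import Mathlib

/-!
By orthonormality `‖∑_{j ∈ T} b_j u_j‖² = ∑_{j ∈ T} b_j²`, and every index lies in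
`C(d-1, N-1) = (N/d) C(d, N)` of the `N`-subsets, which gives the identity.
For the bound, `φ(t) = F(x + t v) - F x - t ⟪∇F x, v⟫` has `|φ'(t)| ≤ L ‖v‖² t`, so comparing
with `L ‖v‖² t² / 2` on `[0, 1]` gives the descent estimate
`|F(x + v) - F x - ⟪∇F x, v⟫| ≤ L ‖v‖² / 2`. Hence each `b_j` lies within `L ν / 2` of
`⟪∇F x, u_j⟫`, so `b_j² ≤ L² ν² / 2 + 2 ⟪∇F x, u_j⟫²`, and Parseval sums the last terms to
`2 ‖∇F x‖²`.
-/

open Finset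
open scoped RealInnerProductSpace

namespace Finset

variable {ι : Type*} [DecidableEq ι]

theorem sum_powersetCard_add_one_sum {M : Type*} [AddCommMonoid M] (s : Finset ι) (n : ℕ)
    (f : ι → M) :
    ∑ T ∈ s.powersetCard (n + 1), ∑ j ∈ T, f j = (#s - 1).choose n • ∑ j ∈ s, f j := by
  have hswap : ∑ T ∈ s.powersetCard (n + 1), ∑ j ∈ T, f j
      = ∑ j ∈ s, ∑ T ∈ (s.powersetCard (n + 1)).filter ({j} ⊆ ·), f j :=
    sum_comm' fun T j => by
      simp only [mem_filter, mem_powersetCard, singleton_subset_iff]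
      grind
  rw [hswap, smul_sum]
  refine sum_congr rfl fun j hj => ?_
  rw [sum_const, card_filter_powersetCard_subset _ _ _ (singleton_subset_iff.2 hj) (by simp),
    card_singleton, Nat.add_sub_cancel]

theorem inv_choose_mul_sum_powersetCard_sum {s : Finset ι} {N : ℕ} (hN : N ≤ #s)
    (f : ι → ℝ) :
    ((#s).choose N : ℝ)⁻¹ * ∑ T ∈ s.powersetCard N, ∑ j ∈ T, f j
      = N / #s * ∑ j ∈ s, f j := by
  obtain _ | n := N
  · simp
  obtain ⟨m, hm⟩ : ∃ m, #s = m + 1 := ⟨#s - 1, by omega⟩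
  have hchoose : ((m + 1 : ℕ) : ℝ) * m.choose n = (m + 1).choose (n + 1) * (n + 1 : ℕ) := by
    exact_mod_cast Nat.add_one_mul_choose_eq m n
  have hpos : (0 : ℝ) < (m + 1).choose (n + 1) := by
    exact_mod_cast Nat.choose_pos (by omega)
  rw [sum_powersetCard_add_one_sum, hm, Nat.add_sub_cancel, nsmul_eq_mul, ← mul_assoc]
  congr 1
  field_simp
  linear_combination hchoose

end Finset

theorem Orthonormal.norm_sum_smul_sq {ι E : Type*} [NormedAddCommGroup E]
    [InnerProductSpace ℝ E] {v : ι → E} (hv : Orthonormal ℝ v) (l : ι → ℝ) (s : Finset ι) :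
    ‖∑ i ∈ s, l i • v i‖ ^ 2 = ∑ i ∈ s, l i ^ 2 := by
  rw [← real_inner_self_eq_norm_sq, hv.inner_sum]
  simp [sq]

section Descent

variable {E : Type*} [NormedAddCommGroup E] [InnerProductSpace ℝ E] [CompleteSpace E]
  {F : E → ℝ} {L : ℝ}

theorem abs_sub_sub_inner_gradient_le (hF : Differentiable ℝ F)
    (hLip : ∀ x y, ‖gradient F x - gradient F y‖ ≤ L * ‖x - y‖) (x v : E) :
    |F (x + v) - F x - ⟪gradient F x, v⟫| ≤ L * ‖v‖ ^ 2 / 2 := by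
  set g := gradient F
  have hderiv (t : ℝ) : HasDerivAt (fun t : ℝ => F (x + t • v) - F x - t * ⟪g x, v⟫)
      (⟪g (x + t • v) - g x, v⟫) t := by
    have hline : HasDerivAt (fun t : ℝ => x + t • v) v t := by
      simpa using ((hasDerivAt_id t).smul_const v).const_add x
    have hF' := (hF (x + t • v)).hasGradientAt.hasFDerivAt.comp_hasDerivAt t hline
    refine ((hF'.sub_const (F x)).sub ((hasDerivAt_id t).mul_const ⟪g x, v⟫)).congr_deriv ?_
    simp [inner_sub_left, g]
  have hbound (t : ℝ) (ht : t ∈ Set.Ico (0 : ℝ) 1) :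
      ‖⟪g (x + t • v) - g x, v⟫‖ ≤ L * ‖v‖ ^ 2 * t :=
    calc ‖⟪g (x + t • v) - g x, v⟫‖
        ≤ ‖g (x + t • v) - g x‖ * ‖v‖ := norm_inner_le_norm _ _
      _ ≤ L * ‖x + t • v - x‖ * ‖v‖ := by gcongr; exact hLip _ _
      _ = L * ‖v‖ ^ 2 * t := by
        rw [add_sub_cancel_left, norm_smul, Real.norm_of_nonneg ht.1]; ring
  have hquad (t : ℝ) :
      HasDerivAt (fun t : ℝ => L * ‖v‖ ^ 2 / 2 * t ^ 2) (L * ‖v‖ ^ 2 * t) t :=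
    ((hasDerivAt_pow 2 t).const_mul (L * ‖v‖ ^ 2 / 2)).congr_deriv (by ring)
  simpa using image_norm_le_of_norm_deriv_right_le_deriv_boundary
    (fun t _ => (hderiv t).continuousAt.continuousWithinAt)
    (fun t _ => (hderiv t).hasDerivWithinAt)
    (by simp) hquad hbound (Set.right_mem_Icc.2 zero_le_one)

theorem abs_slope_sub_inner_gradient_le (hF : Differentiable ℝ F)
    (hLip : ∀ x y, ‖gradient F x - gradient F y‖ ≤ L * ‖x - y‖) (x v : E) {ν : ℝ}
    (hν : ν ≠ 0) :
    |(F (x + ν • v) - F x) / ν - ⟪gradient F x, v⟫| ≤ L * |ν| * ‖v‖ ^ 2 / 2 := by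
  have h := abs_sub_sub_inner_gradient_le hF hLip x (ν • v)
  rw [real_inner_smul_right, norm_smul, Real.norm_eq_abs] at h
  have hslope : (F (x + ν • v) - F x) / ν - ⟪gradient F x, v⟫
      = (F (x + ν • v) - F x - ν * ⟪gradient F x, v⟫) / ν := by
    field_simp
  rw [hslope, abs_div, div_le_iff₀ (abs_pos.2 hν)]
  linarith [show L * (|ν| * ‖v‖) ^ 2 / 2 = L * |ν| * ‖v‖ ^ 2 / 2 * |ν| by ring]

theorem sum_sq_slope_le {ι : Type*} [Fintype ι] (hF : Differentiable ℝ F)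
    (hLip : ∀ x y, ‖gradient F x - gradient F y‖ ≤ L * ‖x - y‖) (x : E)
    (u : OrthonormalBasis ι ℝ E) {ν : ℝ} (hν : ν ≠ 0) :
    ∑ j, ((F (x + ν • u j) - F x) / ν) ^ 2
      ≤ Fintype.card ι * (L ^ 2 * ν ^ 2 / 2) + 2 * ‖gradient F x‖ ^ 2 := by
  have hcoord (j : ι) : ((F (x + ν • u j) - F x) / ν) ^ 2
      ≤ L ^ 2 * ν ^ 2 / 2 + 2 * ⟪gradient F x, u j⟫ ^ 2 := by
    have h := abs_slope_sub_inner_gradient_le hF hLip x (u j) hν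
    rw [u.orthonormal.norm_eq_one, one_pow, mul_one] at h
    have hsq := sq_le_sq' (abs_le.1 h).1 (abs_le.1 h).2
    -- `2 (b - a)² + 2 a² - b² = (b - 2 a)²`
    nlinarith [sq_nonneg ((F (x + ν • u j) - F x) / ν - 2 * ⟪gradient F x, u j⟫), sq_abs ν]
  calc ∑ j, ((F (x + ν • u j) - F x) / ν) ^ 2
      ≤ ∑ j, (L ^ 2 * ν ^ 2 / 2 + 2 * ⟪gradient F x, u j⟫ ^ 2) :=
        sum_le_sum fun j _ => hcoord j
    _ = Fintype.card ι * (L ^ 2 * ν ^ 2 / 2) + 2 * ‖gradient F x‖ ^ 2 := by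
      rw [sum_add_distrib, sum_const, ← mul_sum, u.sum_sq_inner_left, card_univ, nsmul_eq_mul]

end Descent

theorem randomized_subspace_second_moment_general
    {d N : ℕ} (hNd : N ≤ d)
    (F : EuclideanSpace ℝ (Fin d) → ℝ) (L ν : ℝ)
    (hF : Differentiable ℝ F)
    (hLip : ∀ x y, ‖gradient F x - gradient F y‖ ≤ L * ‖x - y‖)
    (hν : 0 < ν) (x : EuclideanSpace ℝ (Fin d))
    (u : OrthonormalBasis (Fin d) ℝ (EuclideanSpace ℝ (Fin d))) :
    ((d.choose N : ℝ))⁻¹ *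
        ∑ T ∈ Finset.powersetCard N (Finset.univ : Finset (Fin d)),
          ‖((d : ℝ) / (N : ℝ)) • ∑ j ∈ T, ((F (x + ν • u j) - F x) / ν) • u j‖ ^ 2
        = ((d : ℝ) / (N : ℝ)) * ∑ j, ((F (x + ν • u j) - F x) / ν) ^ 2 ∧
      ((d : ℝ) / (N : ℝ)) * ∑ j, ((F (x + ν • u j) - F x) / ν) ^ 2
        ≤ (2 * (d : ℝ) / (N : ℝ)) *
            (L ^ 2 * ν ^ 2 * (d : ℝ) / 4 + ‖gradient F x‖ ^ 2) := by
  set b : Fin d → ℝ := fun j => (F (x + ν • u j) - F x) / ν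
  have hnorm (T : Finset (Fin d)) :
      ‖((d : ℝ) / N) • ∑ j ∈ T, b j • u j‖ ^ 2 = ((d : ℝ) / N) ^ 2 * ∑ j ∈ T, b j ^ 2 := by
    rw [norm_smul, mul_pow, u.orthonormal.norm_sum_smul_sq, Real.norm_eq_abs, sq_abs]
  have haverage := inv_choose_mul_sum_powersetCard_sum (s := univ) (by simpa using hNd)
    (fun j => b j ^ 2)
  rw [card_univ, Fintype.card_fin] at haverage
  refine ⟨?_, ?_⟩
  · rw [sum_congr rfl fun T _ => hnorm T, ← mul_sum, mul_left_comm, haverage, ← mul_assoc,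
      ← inv_div (d : ℝ), sq, mul_self_mul_inv]
  · have hsum := sum_sq_slope_le hF hLip x u hν.ne'
    rw [Fintype.card_fin] at hsum
    calc (d : ℝ) / N * ∑ j, b j ^ 2
        ≤ (d : ℝ) / N * (d * (L ^ 2 * ν ^ 2 / 2) + 2 * ‖gradient F x‖ ^ 2) := by gcongr
      _ = 2 * d / N * (L ^ 2 * ν ^ 2 * d / 4 + ‖gradient F x‖ ^ 2) := by ring

/-- (Second moment of the randomized subspace estimator.) Let `F` have
`L`-Lipschitz gradient, `ν > 0`, `u` an orthonormal basis of `ℝ^d`, and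
`bⱼ := (F(x + ν uⱼ) − F(x))/ν`. For `1 ≤ N ≤ d`, averaging uniformly over all subsets
`T ⊆ {1,…,d}` with `|T| = N`:
`(1/C(d,N)) ∑_{|T|=N} ‖(d/N) ∑_{j∈T} bⱼ uⱼ‖² = (d/N) ∑ⱼ bⱼ²`, and this is at most
`(2d/N)(L²ν²d/4 + ‖∇F(x)‖²)`. -/
theorem randomized_subspace_second_moment
    {d N : ℕ} (hd : 1 ≤ d) (hN1 : 1 ≤ N) (hNd : N ≤ d)
    (F : EuclideanSpace ℝ (Fin d) → ℝ) (L ν : ℝ)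
    (hF : Differentiable ℝ F)
    (hLip : ∀ x y, ‖gradient F x - gradient F y‖ ≤ L * ‖x - y‖)
    (hν : 0 < ν) (x : EuclideanSpace ℝ (Fin d))
    (u : OrthonormalBasis (Fin d) ℝ (EuclideanSpace ℝ (Fin d))) :
    ((d.choose N : ℝ))⁻¹ *
        ∑ T ∈ Finset.powersetCard N (Finset.univ : Finset (Fin d)),
          ‖((d : ℝ) / (N : ℝ)) • ∑ j ∈ T, ((F (x + ν • u j) - F x) / ν) • u j‖ ^ 2
        = ((d : ℝ) / (N : ℝ)) * ∑ j, ((F (x + ν • u j) - F x) / ν) ^ 2 ∧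
      ((d : ℝ) / (N : ℝ)) * ∑ j, ((F (x + ν • u j) - F x) / ν) ^ 2
        ≤ (2 * (d : ℝ) / (N : ℝ)) *
            (L ^ 2 * ν ^ 2 * (d : ℝ) / 4 + ‖gradient F x‖ ^ 2) :=
  randomized_subspace_second_moment_general hNd F L ν hF hLip hν x u
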